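/- Let H be a bialgebra over a field k, M a right H-module and right H-comodule, and q : M → H a linear map satisfying h₍₁₎ q(x h₍₂₎) = q(x) h and Δ(q(x)) = 1 ⊗ q(x) + q(x₍₀₎) ⊗ x₍₁₎ for all x ∈ M and h ∈ H. Define x ◁ y := x q(y) (using the right H-action on M) and τ(x ⊗ y) := y₍₀₎ ⊗ x y₍₁₎. Then the braided Leibniz identity holds: (x ◁ y) ◁ z = x ◁ (y ◁ z) + (x ◁ z⟨1⟩) ◁ y⟨2⟩ for all x, y, z ∈ M, where τ(y ⊗ z) = z⟨1⟩ ⊗ y⟨2⟩; explicitly, (x q(y)) q(z) = x q(y q(z)) + (x q(z₍₀₎)) q(y z₍₁₎). -/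
import Mathlib


open TensorProduct LinearMap

/-- The map `x ⊗ h ↦ h₍₁₎ q(xh₍₂₎)` attached to a right action `act`, a coproduct and a
linear map `q : M → H`. -/
noncomputable def eqvL (k H M : Type) [Field k] [Ring H] [Bialgebra k H]
    [AddCommGroup M] [Module k M]
    (act : M ⊗[k] H →ₗ[k] M) (q : M →ₗ[k] H) : M ⊗[k] H →ₗ[k] H :=
  (LinearMap.mul' k H)
  ∘ₗ (TensorProduct.comm k H H).toLinearMap
  ∘ₗ (rTensor H (q ∘ₗ act))
  ∘ₗ (TensorProduct.assoc k M H H).symm.toLinearMap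
  ∘ₗ (lTensor M ((TensorProduct.comm k H H).toLinearMap ∘ₗ Coalgebra.comul))

/-- Let `H` be a bialgebra, `M` a right `H`-module and right
`H`-comodule, and `q : M → H` a linear map satisfying `h₍₁₎ q(xh₍₂₎) = q(x)h` and
`Δ(q(x)) = 1 ⊗ q(x) + q(x₍₀₎) ⊗ x₍₁₎`.  With `x ◁ y := x q(y)` and
`τ(x ⊗ y) = y₍₀₎ ⊗ x y₍₁₎` the braided Leibniz identity holds:
`(x ◁ y) ◁ z = x ◁ (y ◁ z) + (x ◁ z⟨1⟩) ◁ y⟨2⟩`, explicitly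
`(x q(y)) q(z) = x q(y q(z)) + (x q(z₍₀₎)) q(y z₍₁₎)`. -/
theorem stmt14 (k H M : Type) [Field k] [Ring H] [Bialgebra k H]
    [AddCommGroup M] [Module k M]
    (act : M ⊗[k] H →ₗ[k] M) (ρ : M →ₗ[k] M ⊗[k] H)
    -- M is a right H-module
    (hact_one : ∀ m : M, act (m ⊗ₜ (1 : H)) = m)
    (hact_mul : ∀ (m : M) (a b : H),
      act (act (m ⊗ₜ a) ⊗ₜ b) = act (m ⊗ₜ (a * b)))
    -- M is a right H-comodule
    (hcounit : ∀ m : M,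
      (TensorProduct.rid k M) ((lTensor M (Coalgebra.counit (R := k))) (ρ m)) = m)
    (hcoassoc : ∀ m : M,
      (TensorProduct.assoc k M H H) ((rTensor H ρ) (ρ m))
        = (lTensor M (Coalgebra.comul (R := k))) (ρ m))
    (q : M →ₗ[k] H)
    -- h₍₁₎ q(xh₍₂₎) = q(x)h
    (hq_equiv : eqvL k H M act q = (LinearMap.mul' k H) ∘ₗ (rTensor H q))
    -- Δ(q(x)) = 1 ⊗ q(x) + q(x₍₀₎) ⊗ x₍₁₎
    (hq_coder : ∀ x : M,
      Coalgebra.comul (R := k) (q x) = (1 : H) ⊗ₜ[k] q x + (rTensor H q) (ρ x)) :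
    ∀ x y z : M,
      act (act (x ⊗ₜ q y) ⊗ₜ q z)
        = act (x ⊗ₜ q (act (y ⊗ₜ q z)))
          + (act ∘ₗ TensorProduct.map
              ((act ∘ₗ (TensorProduct.mk k M H) x) ∘ₗ q)
              (q ∘ₗ act ∘ₗ (TensorProduct.mk k M H) y)) (ρ z) := by

  intro x y z
  -- abbreviation for the "G" map value
  set G : M ⊗[k] H →ₗ[k] H :=
    (LinearMap.mul' k H) ∘ₗ (TensorProduct.map q (q ∘ₗ act ∘ₗ (TensorProduct.mk k M H) y))
    with hG
  -- key identity in H : q y * q z = q (act (y ⊗ q z)) + G (ρ z)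
  have hmain := LinearMap.congr_fun hq_equiv (y ⊗ₜ[k] q z)
  have e1aux : ∀ t : M ⊗[k] H,
      (LinearMap.mul' k H) ((TensorProduct.comm k H H)
        ((rTensor H (q ∘ₗ act)) ((TensorProduct.assoc k M H H).symm
          (y ⊗ₜ[k] ((TensorProduct.comm k H H) ((rTensor H q) t)))))) = G t := by
    intro t
    induction t using TensorProduct.induction_on with
    | zero => simp
    | tmul m h => simp [hG, mul'_apply]
    | add a b ha hb => simp only [map_add, tmul_add, ha, hb]
  have e1 : eqvL k H M act q (y ⊗ₜ[k] q z)
      = q (act (y ⊗ₜ[k] q z)) + G (ρ z) := by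
    simp only [eqvL, coe_comp, Function.comp_apply, LinearEquiv.coe_coe,
      lTensor_tmul, hq_coder z, map_add, tmul_add]
    rw [e1aux (ρ z)]
    congr 1
    simp [mul'_apply]
  rw [e1] at hmain
  simp only [coe_comp, Function.comp_apply, rTensor_tmul, mul'_apply] at hmain
  -- rewrite RHS second term as act (x ⊗ G (ρ z))
  have e2 : ∀ t : M ⊗[k] H,
      (act ∘ₗ TensorProduct.map
        ((act ∘ₗ (TensorProduct.mk k M H) x) ∘ₗ q)
        (q ∘ₗ act ∘ₗ (TensorProduct.mk k M H) y)) t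
      = act (x ⊗ₜ[k] G t) := by
    intro t
    induction t using TensorProduct.induction_on with
    | zero => simp
    | tmul m h =>
      simp only [hG, coe_comp, Function.comp_apply, map_tmul, mk_apply, mul'_apply]
      exact hact_mul x (q m) (q (act (y ⊗ₜ[k] h)))
    | add a b ha hb => simp only [map_add, ha, hb, tmul_add]
  rw [e2 (ρ z), hact_mul x (q y) (q z), ← hmain]
  simp [tmul_add]
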